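/- Let ((V,E), S, c, d) be a network with positive integer edge costs and let M be a positive integer. Suppose h_{d,M} attains its minimum over 𝔾^n. Then there exists an optimal potential (x,y) ∈ 𝔾^n such that dist(0, x_i) ≤ M and y_i ≤ 2M for every i ∈ V∖S. -/

import Mathlib

open Finset

/-- Representatives of points of the infinite `k`-star: a nonnegative radius and a
branch index. -/
def StarRep (k : ℕ) : Type := {r : ℝ // 0 ≤ r} × Fin k

/-- Two representatives are identified iff they are equal or both have radius `0`. -/
def starRel (k : ℕ) (p q : StarRep k) : Prop := p = q ∨ (p.1.1 = 0 ∧ q.1.1 = 0)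

/-- The setoid identifying all points of radius `0` (the origin). -/
def starSetoid (k : ℕ) : Setoid (StarRep k) where
  r := starRel k
  iseqv := by
    constructor
    · intro p; left; rfl
    · rintro p q (rfl | ⟨h1, h2⟩)
      · left; rfl
      · right; exact ⟨h2, h1⟩
    · rintro p q r (rfl | ⟨h1, h2⟩) (rfl | ⟨h3, h4⟩)
      · left; rfl
      · right; exact ⟨h3, h4⟩
      · right; exact ⟨h1, h2⟩
      · right; exact ⟨h1, h4⟩

/-- The infinite `k`-star `𝕋`: `k` half-lines glued at a common origin. -/
def TStar (k : ℕ) : Type := Quotient (starSetoid k)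

/-- Distance on representatives. -/
noncomputable def starDistFun (k : ℕ) (p q : StarRep k) : ℝ :=
  if p.2 = q.2 then |p.1.1 - q.1.1| else p.1.1 + q.1.1

theorem starDistFun_zero_right (k : ℕ) (p q : StarRep k) (h : q.1.1 = 0) :
    starDistFun k p q = p.1.1 := by
  unfold starDistFun; rw [h]
  split <;> simp [abs_of_nonneg p.1.2]

theorem starDistFun_zero_left (k : ℕ) (p q : StarRep k) (h : p.1.1 = 0) :
    starDistFun k p q = q.1.1 := by
  unfold starDistFun; rw [h]
  split <;> simp [abs_of_nonneg q.1.2, abs_sub_comm]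

/-- The metric `dist` of the infinite `k`-star. -/
noncomputable def starDist (k : ℕ) : TStar k → TStar k → ℝ :=
  Quotient.lift₂ (starDistFun k) (by
    rintro p q p' q' (rfl | ⟨h1, h2⟩) (rfl | ⟨h3, h4⟩)
    · rfl
    · rw [starDistFun_zero_right k p q h3, starDistFun_zero_right k p q' h4]
    · rw [starDistFun_zero_left k p q h1, starDistFun_zero_left k p' q h2]
    · rw [starDistFun_zero_right k p q h3, starDistFun_zero_right k p' q' h4, h1, h2])

/-- The distance from the origin (the radius). -/
noncomputable def starRad (k : ℕ) : TStar k → ℝ :=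
  Quotient.lift (fun p : StarRep k => p.1.1) (by
    rintro p q (rfl | ⟨h1, h2⟩) <;> simp_all)

/-- The point at distance `r ≥ 0` on the `s`-th branch. -/
def starPt (k : ℕ) (r : ℝ) (hr : 0 ≤ r) (s : Fin k) : TStar k :=
  Quotient.mk (starSetoid k) (⟨r, hr⟩, s)

/-- A real is an integer. -/
def IsIntegralReal (r : ℝ) : Prop := ∃ z : ℤ, r = (z : ℝ)

/-- A real lies in `ℤ + 1/2`. -/
def IsHalfIntegralOdd (r : ℝ) : Prop := ∃ z : ℤ, r = (z : ℝ) + 1 / 2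

/-- The grid `𝔾 ⊆ 𝕋 × ℝ`: both coordinates integral, or both proper half-integral. -/
def StarGrid (k : ℕ) : Set (TStar k × ℝ) :=
  {p | (IsIntegralReal (starRad k p.1) ∧ IsIntegralReal p.2) ∨
    (IsHalfIntegralOdd (starRad k p.1) ∧ IsHalfIntegralOdd p.2)}

/-- A potential: a point of `𝔾^n` satisfying the dual constraints
`dist(x_i,x_j) − y_i − y_j ≤ 2d(ij)` on edges, the boundary condition
`(x_s, y_s) = ((M,s), 0)` on terminals (the terminals being the first `k` nodes),
and `y ≥ 0`. -/
def IsPotential (n k : ℕ) (G : SimpleGraph (Fin n)) (d : Sym2 (Fin n) → ℕ) (M : ℕ)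
    (p : Fin n → TStar k × ℝ) : Prop :=
  (∀ i, p i ∈ StarGrid k) ∧
  (∀ i j, G.Adj i j →
    starDist k (p i).1 (p j).1 - (p i).2 - (p j).2 ≤ 2 * (d s(i, j) : ℝ)) ∧
  (∀ i : Fin n, ∀ h : i.val < k,
    p i = (starPt k (M : ℝ) (Nat.cast_nonneg M) ⟨i.val, h⟩, 0)) ∧
  (∀ i, 0 ≤ (p i).2)

/-- The dual objective value `Σ_{i ∈ V∖S} c(i)·y_i` (the value of `h_{d,M}` at a
potential). -/
noncomputable def hVal (n k : ℕ) (c : Fin n → ℕ) (p : Fin n → TStar k × ℝ) : ℝ :=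
  ∑ i ∈ univ.filter (fun i : Fin n => k ≤ i.val), (c i : ℝ) * (p i).2

/-! Capping at level `m` lowers a value to `m` if it is integral and to `m - 1/2` if it is
proper half-integral. This keeps the parity of every coordinate, hence keeps points in `𝔾`,
and is `1`-Lipschitz on `½ℤ` because two values of different parity are at least `1/2`
apart, which is exactly the gap between the two caps. Capping every radius at `M` and every
`y_i` at `2M` therefore preserves the boundary condition and all edge constraints that
involve no capped `y_i`; on an edge with a capped endpoint, `dist ≤ 2M` and `y_i ≥ 2M - 1/2`
leave slack `1/2 ≤ 2 d(ij)`. Since capping never increases `y`, it maps an optimal potential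
to an optimal potential in the required range. -/

theorem IsHalfIntegralOdd.not_isIntegralReal {r : ℝ} (h : IsHalfIntegralOdd r) :
    ¬ IsIntegralReal r := by
  rcases h with ⟨z, rfl⟩
  rintro ⟨w, hw⟩
  have h2 : ((2 * z + 1 : ℤ) : ℝ) = ((2 * w : ℤ) : ℝ) := by push_cast; linarith
  have := Int.cast_injective (α := ℝ) h2
  omega

theorem IsIntegralReal.min {a b : ℝ} (ha : IsIntegralReal a) (hb : IsIntegralReal b) :
    IsIntegralReal (min a b) := by
  rcases ha with ⟨z, rfl⟩; rcases hb with ⟨w, rfl⟩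
  exact ⟨Min.min z w, by rw [Int.cast_min]⟩

theorem IsHalfIntegralOdd.min {a b : ℝ} (ha : IsHalfIntegralOdd a) (hb : IsHalfIntegralOdd b) :
    IsHalfIntegralOdd (min a b) := by
  rcases ha with ⟨z, rfl⟩; rcases hb with ⟨w, rfl⟩
  exact ⟨Min.min z w, by rw [Int.cast_min, min_add_add_right]⟩

theorem isIntegralReal_natCast (m : ℕ) : IsIntegralReal (m : ℝ) := ⟨m, by push_cast; rfl⟩

theorem isHalfIntegralOdd_natCast_sub_half (m : ℕ) : IsHalfIntegralOdd ((m : ℝ) - 1 / 2) :=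
  ⟨(m : ℤ) - 1, by push_cast; ring⟩

theorem IsIntegralReal.half_le_abs_sub {r r' : ℝ} (h : IsIntegralReal r)
    (h' : IsHalfIntegralOdd r') : 1 / 2 ≤ |r - r'| := by
  rcases h with ⟨z, rfl⟩; rcases h' with ⟨w, rfl⟩
  have hcast : (z : ℝ) - ((w : ℝ) + 1 / 2) = ((z - w : ℤ) : ℝ) - 1 / 2 := by push_cast; ring
  rw [hcast]
  rcases le_or_gt (z - w) 0 with hle | hgt
  · have : ((z - w : ℤ) : ℝ) ≤ 0 := by exact_mod_cast hle
    rw [abs_of_nonpos (by linarith)]; linarith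
  · have : (1 : ℝ) ≤ ((z - w : ℤ) : ℝ) := by exact_mod_cast hgt
    rw [abs_of_nonneg (by linarith)]; linarith

open Classical in
noncomputable def parityCap (m : ℕ) (r : ℝ) : ℝ :=
  min r (if IsIntegralReal r then (m : ℝ) else (m : ℝ) - 1 / 2)

section parityCap

variable {m : ℕ} {r r' : ℝ}

theorem parityCap_le_self : parityCap m r ≤ r := min_le_left _ _

theorem parityCap_le : parityCap m r ≤ m := by
  unfold parityCap; split_ifs <;> simp

theorem parityCap_nonneg (hm : 1 ≤ m) (hr : 0 ≤ r) : 0 ≤ parityCap m r := by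
  have : (1 : ℝ) ≤ m := by exact_mod_cast hm
  unfold parityCap; split_ifs <;> exact le_min hr (by linarith)

theorem parityCap_eq_self (hr : IsIntegralReal r) (hrm : r ≤ m) : parityCap m r = r := by
  rw [parityCap, if_pos hr, min_eq_left hrm]

theorem parityCap_eq_self_or_ge : parityCap m r = r ∨ (m : ℝ) - 1 / 2 ≤ parityCap m r := by
  unfold parityCap
  split_ifs <;> rcases min_choice r _ with h | h <;> rw [h]
  all_goals first | exact Or.inl rfl | (right; linarith)

theorem IsIntegralReal.parityCap (hr : IsIntegralReal r) : IsIntegralReal (parityCap m r) := by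
  rw [_root_.parityCap, if_pos hr]
  exact hr.min (isIntegralReal_natCast m)

theorem IsHalfIntegralOdd.parityCap (hr : IsHalfIntegralOdd r) :
    IsHalfIntegralOdd (parityCap m r) := by
  rw [_root_.parityCap, if_neg hr.not_isIntegralReal]
  exact hr.min (isHalfIntegralOdd_natCast_sub_half m)

theorem abs_parityCap_sub_parityCap_le (hr : IsIntegralReal r ∨ IsHalfIntegralOdd r)
    (hr' : IsIntegralReal r' ∨ IsHalfIntegralOdd r') :
    |parityCap m r - parityCap m r'| ≤ |r - r'| := by
  refine (abs_min_sub_min_le_max _ _ _ _).trans (max_le le_rfl ?_)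
  rcases hr with hr | hr <;> rcases hr' with hr' | hr'
  · simp [if_pos hr, if_pos hr']
  · rw [if_pos hr, if_neg hr'.not_isIntegralReal]
    norm_num [abs_of_pos]
    simpa using hr.half_le_abs_sub hr'
  · rw [if_neg hr.not_isIntegralReal, if_pos hr', abs_sub_comm r]
    norm_num [abs_of_pos]
    simpa using hr'.half_le_abs_sub hr
  · simp [if_neg hr.not_isIntegralReal, if_neg hr'.not_isIntegralReal]

end parityCap

theorem starDist_le_starRad_add {k : ℕ} (x y : TStar k) :
    starDist k x y ≤ starRad k x + starRad k y := by
  induction x, y using Quotient.inductionOn₂ with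
  | h p q =>
    change starDistFun k p q ≤ p.1.1 + q.1.1
    unfold starDistFun
    split_ifs
    · rw [abs_sub_le_iff]
      constructor <;> linarith [p.1.2, q.1.2]
    · exact le_rfl

noncomputable def starCap (k m : ℕ) (hm : 1 ≤ m) : TStar k → TStar k :=
  Quotient.map' (s₁ := starSetoid k) (s₂ := starSetoid k)
    (fun p => (⟨parityCap m p.1.1, parityCap_nonneg hm p.1.2⟩, p.2)) (by
      rintro p q (rfl | ⟨hp, hq⟩)
      · exact Or.inl rfl
      · have hzero : parityCap m 0 = 0 := parityCap_eq_self ⟨0, by simp⟩ (Nat.cast_nonneg m)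
        exact Or.inr ⟨by simp only [hp, hzero], by simp only [hq, hzero]⟩)

section starCap

variable {k m : ℕ} (hm : 1 ≤ m)

theorem starRad_starCap (x : TStar k) :
    starRad k (starCap k m hm x) = parityCap m (starRad k x) := by
  induction x using Quotient.inductionOn with
  | h p => rfl

theorem starDist_starCap_le {x y : TStar k}
    (hx : IsIntegralReal (starRad k x) ∨ IsHalfIntegralOdd (starRad k x))
    (hy : IsIntegralReal (starRad k y) ∨ IsHalfIntegralOdd (starRad k y)) :
    starDist k (starCap k m hm x) (starCap k m hm y) ≤ starDist k x y := by
  induction x, y using Quotient.inductionOn₂ with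
  | h p q =>
    change starDistFun k (⟨parityCap m p.1.1, _⟩, p.2) (⟨parityCap m q.1.1, _⟩, q.2) ≤
      starDistFun k p q
    unfold starDistFun
    split_ifs
    · exact abs_parityCap_sub_parityCap_le hx hy
    · exact add_le_add parityCap_le_self parityCap_le_self

theorem starDist_starCap_le_two_mul (x y : TStar k) :
    starDist k (starCap k m hm x) (starCap k m hm y) ≤ 2 * m := by
  refine (starDist_le_starRad_add _ _).trans ?_
  rw [starRad_starCap, starRad_starCap]
  linarith [parityCap_le (m := m) (r := starRad k x), parityCap_le (m := m) (r := starRad k y)]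

theorem starCap_starPt {r : ℝ} (hr0 : 0 ≤ r) (hr : IsIntegralReal r) (hrm : r ≤ m)
    (s : Fin k) : starCap k m hm (starPt k r hr0 s) = starPt k r hr0 s :=
  Quotient.sound (Or.inl (Prod.ext (Subtype.ext (parityCap_eq_self hr hrm)) rfl))

end starCap

noncomputable def capPoint (k M : ℕ) (hM : 1 ≤ M) (a : TStar k × ℝ) : TStar k × ℝ :=
  (starCap k M hM a.1, parityCap (2 * M) a.2)

section capPoint

variable {k M : ℕ} (hM : 1 ≤ M)

theorem starRad_capPoint_le (a : TStar k × ℝ) : starRad k (capPoint k M hM a).1 ≤ M := by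
  rw [capPoint, starRad_starCap]
  exact parityCap_le

theorem capPoint_snd_le (a : TStar k × ℝ) : (capPoint k M hM a).2 ≤ 2 * M := by
  simpa [capPoint] using parityCap_le (m := 2 * M) (r := a.2)

theorem capPoint_snd_nonneg {a : TStar k × ℝ} (ha : 0 ≤ a.2) : 0 ≤ (capPoint k M hM a).2 :=
  parityCap_nonneg (by omega) ha

theorem capPoint_mem_starGrid {a : TStar k × ℝ} (ha : a ∈ StarGrid k) :
    capPoint k M hM a ∈ StarGrid k := by
  simp only [StarGrid, Set.mem_ofPred_eq, capPoint, starRad_starCap] at ha ⊢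
  rcases ha with ⟨hr, hy⟩ | ⟨hr, hy⟩
  · exact Or.inl ⟨hr.parityCap, hy.parityCap⟩
  · exact Or.inr ⟨hr.parityCap, hy.parityCap⟩

theorem capPoint_terminal (s : Fin k) :
    capPoint k M hM (starPt k M (Nat.cast_nonneg M) s, 0) =
      (starPt k M (Nat.cast_nonneg M) s, 0) := by
  refine Prod.ext (starCap_starPt hM _ (isIntegralReal_natCast M) le_rfl s) ?_
  exact parityCap_eq_self ⟨0, by simp⟩ (Nat.cast_nonneg _)

theorem capPoint_edge {a b : TStar k × ℝ} {w : ℝ}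
    (ha : a ∈ StarGrid k) (hb : b ∈ StarGrid k)
    (ha0 : 0 ≤ a.2) (hb0 : 0 ≤ b.2) (hw : 1 / 2 ≤ w)
    (hab : starDist k a.1 b.1 - a.2 - b.2 ≤ w) :
    starDist k (capPoint k M hM a).1 (capPoint k M hM b).1 - (capPoint k M hM a).2 -
      (capPoint k M hM b).2 ≤ w := by
  have hrad : ∀ {c : TStar k × ℝ}, c ∈ StarGrid k →
      IsIntegralReal (starRad k c.1) ∨ IsHalfIntegralOdd (starRad k c.1) := fun hc =>
    hc.imp And.left And.left
  have hcapped : ∀ c : TStar k × ℝ,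
      (capPoint k M hM c).2 = c.2 ∨ 2 * (M : ℝ) - 1 / 2 ≤ (capPoint k M hM c).2 := fun c => by
    simpa [capPoint] using parityCap_eq_self_or_ge (m := 2 * M) (r := c.2)
  have hdist : starDist k (capPoint k M hM a).1 (capPoint k M hM b).1 ≤ 2 * M :=
    starDist_starCap_le_two_mul hM a.1 b.1
  have ha0' := capPoint_snd_nonneg hM ha0
  have hb0' := capPoint_snd_nonneg hM hb0
  rcases hcapped a with hae | hage
  · rcases hcapped b with hbe | hbge
    · have hle : starDist k (capPoint k M hM a).1 (capPoint k M hM b).1 ≤ starDist k a.1 b.1 :=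
        starDist_starCap_le hM (hrad ha) (hrad hb)
      linarith
    · linarith
  · linarith

end capPoint

theorem hVal_mono {n k : ℕ} (c : Fin n → ℕ) {p q : Fin n → TStar k × ℝ}
    (h : ∀ i, (p i).2 ≤ (q i).2) : hVal n k c p ≤ hVal n k c q :=
  Finset.sum_le_sum fun i _ => mul_le_mul_of_nonneg_left (h i) (Nat.cast_nonneg _)

theorem IsPotential.capPoint {n k : ℕ} {G : SimpleGraph (Fin n)} {d : Sym2 (Fin n) → ℕ}
    {M : ℕ} (hM : 1 ≤ M) (hd : ∀ e ∈ G.edgeSet, 1 ≤ d e) {p : Fin n → TStar k × ℝ}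
    (hp : IsPotential n k G d M p) :
    IsPotential n k G d M (fun i => capPoint k M hM (p i)) := by
  obtain ⟨hgrid, hedge, hterm, hnonneg⟩ := hp
  refine ⟨fun i => capPoint_mem_starGrid hM (hgrid i), fun i j hij => ?_,
    fun i hi => by dsimp only; rw [hterm i hi, capPoint_terminal],
    fun i => capPoint_snd_nonneg hM (hnonneg i)⟩
  have hdij : (1 : ℝ) ≤ d s(i, j) := by exact_mod_cast hd _ (G.mem_edgeSet.mpr hij)
  exact capPoint_edge hM (hgrid i) (hgrid j) (hnonneg i) (hnonneg j) (by linarith)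
    (hedge i j hij)

theorem exists_optimal_potential_in_range_general
    (n k : ℕ)
    (G : SimpleGraph (Fin n)) (c : Fin n → ℕ) (d : Sym2 (Fin n) → ℕ)
    (hd : ∀ e ∈ G.edgeSet, 1 ≤ d e)
    (M : ℕ) (hM : 1 ≤ M)
    (hattain : ∃ p : Fin n → TStar k × ℝ, IsPotential n k G d M p ∧
      ∀ q : Fin n → TStar k × ℝ, IsPotential n k G d M q →
        hVal n k c p ≤ hVal n k c q) :
    ∃ p : Fin n → TStar k × ℝ, IsPotential n k G d M p ∧
      (∀ q : Fin n → TStar k × ℝ, IsPotential n k G d M q →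
        hVal n k c p ≤ hVal n k c q) ∧
      ∀ i : Fin n, k ≤ i.val → starRad k (p i).1 ≤ (M : ℝ) ∧ (p i).2 ≤ 2 * (M : ℝ) := by
  obtain ⟨p, hp, hopt⟩ := hattain
  refine ⟨fun i => capPoint k M hM (p i), hp.capPoint hM hd, fun q hq => ?_,
    fun i _ => ⟨starRad_capPoint_le hM (p i), capPoint_snd_le hM (p i)⟩⟩
  exact (hVal_mono c fun i => parityCap_le_self).trans (hopt q hq)

/-- **Range of an optimal potential.** If `h_{d,M}` attains its minimum, then there is
an optimal potential `(x,y)` with `dist(0, x_i) ≤ M` and `y_i ≤ 2M` for every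
nonterminal node `i`. -/
theorem exists_optimal_potential_in_range
    (n k : ℕ) (hk : 3 ≤ k) (hkn : k ≤ n)
    (G : SimpleGraph (Fin n)) (c : Fin n → ℕ) (d : Sym2 (Fin n) → ℕ)
    (hTT : ∀ i j : Fin n, G.Adj i j → ¬(i.val < k ∧ j.val < k))
    (hd : ∀ e ∈ G.edgeSet, 1 ≤ d e)
    (M : ℕ) (hM : 1 ≤ M)
    (hattain : ∃ p : Fin n → TStar k × ℝ, IsPotential n k G d M p ∧
      ∀ q : Fin n → TStar k × ℝ, IsPotential n k G d M q →
        hVal n k c p ≤ hVal n k c q) :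
    ∃ p : Fin n → TStar k × ℝ, IsPotential n k G d M p ∧
      (∀ q : Fin n → TStar k × ℝ, IsPotential n k G d M q →
        hVal n k c p ≤ hVal n k c q) ∧
      ∀ i : Fin n, k ≤ i.val → starRad k (p i).1 ≤ (M : ℝ) ∧ (p i).2 ≤ 2 * (M : ℝ) :=
  exists_optimal_potential_in_range_general n k G c d hd M hM hattain
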